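/- For the 4-dimensional nilpotent Lie algebra L_{4,3} = ⟨x₁,x₂,x₃,x₄ : [x₁,x₂]=x₃, [x₁,x₃]=x₄⟩ of class 3, the exterior square L_{4,3} ∧ L_{4,3} is abelian of dimension 4 and the nonabelian tensor square L_{4,3} ⊗ L_{4,3} is abelian of dimension 7. -/

import Mathlib

open LieAlgebra Matrix Module


open LieAlgebra

section ProdLie
variable {L M : Type*}

instance prodLieRing [LieRing L] [LieRing M] : LieRing (L × M) where
  bracket x y := (⁅x.1, y.1⁆, ⁅x.2, y.2⁆)
  add_lie x y z := by ext <;> simp [add_lie]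
  lie_add x y z := by ext <;> simp [lie_add]
  lie_self x := by ext <;> simp
  leibniz_lie x y z := by ext <;> simp

@[simp] theorem prod_bracket_fst [LieRing L] [LieRing M] (x y : L × M) :
    ⁅x, y⁆.1 = ⁅x.1, y.1⁆ := rfl
@[simp] theorem prod_bracket_snd [LieRing L] [LieRing M] (x y : L × M) :
    ⁅x, y⁆.2 = ⁅x.2, y.2⁆ := rfl

instance prodLieAlgebra (F : Type*) [CommRing F] [LieRing L] [LieRing M]
    [LieAlgebra F L] [LieAlgebra F M] : LieAlgebra F (L × M) where
  lie_smul t x y := by ext <;> simp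
end ProdLie

section AbL
variable (F : Type*) [Field F]

/-- The abelian Lie algebra of dimension `k` over `F`. -/
def AbLie (k : ℕ) : Type _ := Fin k → F

instance (k : ℕ) : AddCommGroup (AbLie F k) := Pi.addCommGroup
instance (k : ℕ) : Module F (AbLie F k) := Pi.module _ _ _

instance (k : ℕ) : LieRing (AbLie F k) where
  bracket _ _ := 0
  add_lie _ _ _ := (zero_add 0).symm
  lie_add _ _ _ := (zero_add 0).symm
  lie_self _ := rfl
  leibniz_lie _ _ _ := (zero_add 0).symm

instance (k : ℕ) : LieAlgebra F (AbLie F k) where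
  lie_smul t x y := (smul_zero t).symm

instance (k : ℕ) : FiniteDimensional F (AbLie F k) :=
  (inferInstance : FiniteDimensional F (Fin k → F))

instance (k : ℕ) : IsLieAbelian (AbLie F k) := ⟨fun _ _ => rfl⟩
end AbL
open Matrix
section Heis
variable (F : Type*) [Field F]

/-- The Heisenberg Lie algebra `H(m)` of dimension `2m+1`. -/
def Heis (m : ℕ) : Type _ := (Fin m → F) × (Fin m → F) × F

instance (m : ℕ) : AddCommGroup (Heis F m) := Prod.instAddCommGroup
instance (m : ℕ) : Module F (Heis F m) := Prod.instModule

instance (m : ℕ) : LieRing (Heis F m) where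
  bracket x y := (0, 0, x.1 ⬝ᵥ y.2.1 - y.1 ⬝ᵥ x.2.1)
  add_lie x y z := by
    refine Prod.ext ?_ (Prod.ext ?_ ?_)
    · show (0 : Fin m → F) = 0 + 0; rw [add_zero]
    · show (0 : Fin m → F) = 0 + 0; rw [add_zero]
    · show (x.1 + y.1) ⬝ᵥ z.2.1 - z.1 ⬝ᵥ (x.2.1 + y.2.1) =
        (x.1 ⬝ᵥ z.2.1 - z.1 ⬝ᵥ x.2.1) + (y.1 ⬝ᵥ z.2.1 - z.1 ⬝ᵥ y.2.1)
      rw [add_dotProduct, dotProduct_add]; ring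
  lie_add x y z := by
    refine Prod.ext ?_ (Prod.ext ?_ ?_)
    · show (0 : Fin m → F) = 0 + 0; rw [add_zero]
    · show (0 : Fin m → F) = 0 + 0; rw [add_zero]
    · show x.1 ⬝ᵥ (y.2.1 + z.2.1) - (y.1 + z.1) ⬝ᵥ x.2.1 =
        (x.1 ⬝ᵥ y.2.1 - y.1 ⬝ᵥ x.2.1) + (x.1 ⬝ᵥ z.2.1 - z.1 ⬝ᵥ x.2.1)
      rw [add_dotProduct, dotProduct_add]; ring
  lie_self x := by
    refine Prod.ext rfl (Prod.ext rfl ?_)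
    show x.1 ⬝ᵥ x.2.1 - x.1 ⬝ᵥ x.2.1 = 0
    ring
  leibniz_lie x y z := by
    refine Prod.ext ?_ (Prod.ext ?_ ?_)
    · show (0 : Fin m → F) = 0 + 0; rw [add_zero]
    · show (0 : Fin m → F) = 0 + 0; rw [add_zero]
    · show x.1 ⬝ᵥ (0 : Fin m → F) - (0 : Fin m → F) ⬝ᵥ x.2.1 =
        ((0 : Fin m → F) ⬝ᵥ z.2.1 - z.1 ⬝ᵥ (0 : Fin m → F)) +
          (y.1 ⬝ᵥ (0 : Fin m → F) - (0 : Fin m → F) ⬝ᵥ y.2.1)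
      simp

instance (m : ℕ) : LieAlgebra F (Heis F m) where
  lie_smul t x y := by
    refine Prod.ext ?_ (Prod.ext ?_ ?_)
    · show (0 : Fin m → F) = t • 0; rw [smul_zero]
    · show (0 : Fin m → F) = t • 0; rw [smul_zero]
    · show x.1 ⬝ᵥ (t • y.2.1) - (t • y.1) ⬝ᵥ x.2.1 = t • (x.1 ⬝ᵥ y.2.1 - y.1 ⬝ᵥ x.2.1)
      rw [dotProduct_smul, smul_dotProduct, smul_sub]

instance (m : ℕ) : FiniteDimensional F (Heis F m) :=
  (inferInstance : FiniteDimensional F ((Fin m → F) × (Fin m → F) × F))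
end Heis
open LieAlgebra

universe u v

section Functors
variable (F : Type u) [Field F] (L : Type v) [LieRing L] [LieAlgebra F L]

/-- The canonical free presentation `FreeLieAlgebra F L → L`. -/
noncomputable def presHom : FreeLieAlgebra F L →ₗ⁅F⁆ L := FreeLieAlgebra.lift F id

/-- The relation ideal `R` of the canonical free presentation. -/
noncomputable def presKer : LieIdeal F (FreeLieAlgebra F L) := (presHom F L).ker

/-- The Schur multiplier `M(L) = (R ∩ F²)/[R,F]` of a Lie algebra. -/
noncomputable abbrev Multiplier : Type (max u v) :=
  ↥((presKer F L ⊓ derivedSeries F (FreeLieAlgebra F L) 1).toSubmodule) ⧸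
    (Submodule.comap
      ((presKer F L ⊓ derivedSeries F (FreeLieAlgebra F L) 1).toSubmodule).subtype
      (⁅presKer F L, (⊤ : LieIdeal F (FreeLieAlgebra F L))⁆ : LieIdeal F (FreeLieAlgebra F L)).toSubmodule)


/-- Relations defining the nonabelian tensor square. -/
def tensorRel : Set (FreeLieAlgebra F (L × L)) :=
  letI e : L × L → FreeLieAlgebra F (L × L) := FreeLieAlgebra.of F
  { x | (∃ (c : F) (a b : L), x = e (c • a, b) - c • e (a, b)) ∨
        (∃ (c : F) (a b : L), x = e (a, c • b) - c • e (a, b)) ∨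
        (∃ a a' b : L, x = e (a + a', b) - e (a, b) - e (a', b)) ∨
        (∃ a b b' : L, x = e (a, b + b') - e (a, b) - e (a, b')) ∨
        (∃ a a' b : L, x = e (⁅a, a'⁆, b) - e (a, ⁅a', b⁆) + e (a', ⁅a, b⁆)) ∨
        (∃ a b b' : L, x = e (a, ⁅b, b'⁆) - e (⁅b', a⁆, b) + e (⁅b, a⁆, b')) ∨
        (∃ a b a' b' : L, x = ⁅e (a, b), e (a', b')⁆ + e (⁅b, a⁆, ⁅a', b'⁆)) }

/-- The nonabelian tensor square `L ⊗ L`. -/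
abbrev NTensor : Type (max u v) :=
  FreeLieAlgebra F (L × L) ⧸ LieSubmodule.lieSpan F (FreeLieAlgebra F (L × L)) (tensorRel F L)


/-- The generator `a ⊗ b` of the nonabelian tensor square. -/
noncomputable def tmk (a b : L) : NTensor F L :=
  LieSubmodule.Quotient.mk (N := LieSubmodule.lieSpan F (FreeLieAlgebra F (L × L)) (tensorRel F L))
    (FreeLieAlgebra.of F (a, b))

/-- The square `L □ L`, i.e. the subalgebra of `L ⊗ L` generated by the elements `a ⊗ a`. -/
noncomputable def SqSub : LieSubalgebra F (NTensor F L) :=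
  LieSubalgebra.lieSpan F _ { x | ∃ a : L, x = tmk F L a a }

/-- The ideal of `L ⊗ L` generated by the elements `a ⊗ a`. -/
noncomputable def sqIdeal : LieIdeal F (NTensor F L) :=
  LieSubmodule.lieSpan F _ { x | ∃ a : L, x = tmk F L a a }

/-- The exterior square `L ∧ L`. -/
noncomputable abbrev ExtSq : Type (max u v) := NTensor F L ⧸ sqIdeal F L


/-- The generator `a ∧ b` of the exterior square. -/
noncomputable def wmk (a b : L) : ExtSq F L :=
  LieSubmodule.Quotient.mk (N := sqIdeal F L) (tmk F L a b)

/-- The exterior center `Z^∧(L)`. -/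
noncomputable def extCenter : Set L := { x : L | ∀ l : L, wmk F L x l = 0 }

/-- A Lie algebra is capable if it is isomorphic to `H/Z(H)` for some Lie algebra `H`. -/
def Capable : Prop :=
  ∃ (H : Type (max u v)) (_ : LieRing H) (_ : LieAlgebra F H),
    Nonempty ((H ⧸ LieAlgebra.center F H) ≃ₗ⁅F⁆ L)

/-- The corank `t(L)` of an `n`-dimensional nilpotent Lie algebra. -/
noncomputable def corank : ℕ :=
  Module.finrank F L * (Module.finrank F L - 1) / 2 - Module.finrank F (Multiplier F L)

/-- The abelianization of `L` (as an `F`-module). -/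
noncomputable abbrev AbQuot : Type v := L ⧸ derivedSeries F L 1

end Functors
section L43
variable (F : Type u) [Field F]

/-- The 4-dimensional filiform nilpotent Lie algebra `L_{4,3}` with
`[x₁,x₂] = x₃`, `[x₁,x₃] = x₄`. -/
def L43 : Type u := Fin 4 → F

instance : AddCommGroup (L43 F) := Pi.addCommGroup
instance : Module F (L43 F) := Pi.module _ _ _

instance : LieRing (L43 F) where
  bracket x y := ![0, 0, x 0 * y 1 - y 0 * x 1, x 0 * y 2 - y 0 * x 2]
  add_lie x y z := by
    funext i
    show (![0, 0, (x 0 + y 0) * z 1 - z 0 * (x 1 + y 1),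
            (x 0 + y 0) * z 2 - z 0 * (x 2 + y 2)] : Fin 4 → F) i =
      ![0, 0, x 0 * z 1 - z 0 * x 1, x 0 * z 2 - z 0 * x 2] i +
      ![0, 0, y 0 * z 1 - z 0 * y 1, y 0 * z 2 - z 0 * y 2] i
    fin_cases i <;> simp <;> ring
  lie_add x y z := by
    funext i
    show (![0, 0, x 0 * (y 1 + z 1) - (y 0 + z 0) * x 1,
            x 0 * (y 2 + z 2) - (y 0 + z 0) * x 2] : Fin 4 → F) i =
      ![0, 0, x 0 * y 1 - y 0 * x 1, x 0 * y 2 - y 0 * x 2] i +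
      ![0, 0, x 0 * z 1 - z 0 * x 1, x 0 * z 2 - z 0 * x 2] i
    fin_cases i <;> simp <;> ring
  lie_self x := by
    funext i
    show (![0, 0, x 0 * x 1 - x 0 * x 1, x 0 * x 2 - x 0 * x 2] : Fin 4 → F) i = 0
    fin_cases i <;> simp
  leibniz_lie x y z := by
    funext i
    set b : (Fin 4 → F) → (Fin 4 → F) → Fin 4 → F :=
      fun u v => ![0, 0, u 0 * v 1 - v 0 * u 1, u 0 * v 2 - v 0 * u 2] with hb
    show b x (b y z) i = b (b x y) z i + b y (b x z) i
    fin_cases i <;> simp [hb] <;> ring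

instance : LieAlgebra F (L43 F) where
  lie_smul t x y := by
    funext i
    show (![0, 0, x 0 * (t * y 1) - (t * y 0) * x 1,
            x 0 * (t * y 2) - (t * y 0) * x 2] : Fin 4 → F) i =
      (t • (![0, 0, x 0 * y 1 - y 0 * x 1, x 0 * y 2 - y 0 * x 2] : Fin 4 → F)) i
    fin_cases i <;> simp <;> ring

instance : FiniteDimensional F (L43 F) := inferInstanceAs (FiniteDimensional F (Fin 4 → F))
end L43

/-!
Write `x₁, …, x₄` for the standard basis. The relations of `L ⊗ L` give
`[a ⊗ b, c ⊗ d] = -([b, a] ⊗ [c, d])`, and together with the other relations they force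
`u ⊗ v = 0` for `u, v ∈ L² = ⟨x₃, x₄⟩`, so `L ⊗ L` is abelian. They also reduce every `xᵢ ⊗ xⱼ`
to a combination of the seven tensors
`x₁⊗x₂, x₁⊗x₃, x₁⊗x₄, x₂⊗x₃, x₁⊗x₁, x₂⊗x₂, x₁⊗x₂ + x₂⊗x₁`,
which are linearly independent because an explicit bilinear map `L × L → F⁷` respecting all
relations sends them to the standard basis. In `L ∧ L` the last three become zero, and the first
four coordinates of that map, being alternating, still separate the first four.
-/

theorem FreeLieAlgebra.lieSpan_range_of (R X : Type*) [CommRing R] :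
    LieSubalgebra.lieSpan R (FreeLieAlgebra R X) (Set.range (of R)) = ⊤ := by
  set K := LieSubalgebra.lieSpan R (FreeLieAlgebra R X) (Set.range (of R))
  let g : FreeLieAlgebra R X →ₗ⁅R⁆ K :=
    lift R fun x => ⟨of R x, LieSubalgebra.subset_lieSpan ⟨x, rfl⟩⟩
  have hg : K.incl.comp g = LieHom.id := hom_ext fun x => by simp [g]
  refine eq_top_iff.mpr fun y _ => ?_
  have hy : (g y : FreeLieAlgebra R X) = y := DFunLike.congr_fun hg y
  exact hy ▸ (g y).2

namespace LieIdeal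

variable {R L L' : Type*} [CommRing R] [LieRing L] [LieAlgebra R L] [LieRing L'] [LieAlgebra R L']
  (I : LieIdeal R L)

def mkQ : L →ₗ⁅R⁆ L ⧸ I :=
  { (LieSubmodule.Quotient.mk' I : L →ₗ[R] L ⧸ I) with
    map_lie' := fun {x y} => LieSubmodule.Quotient.mk_bracket I x y }

theorem mkQ_surjective : Function.Surjective I.mkQ := LieSubmodule.Quotient.surjective_mk' I

instance [IsLieAbelian L] : IsLieAbelian (L ⧸ I) := I.mkQ_surjective.isLieAbelian inferInstance

def liftQ (f : L →ₗ⁅R⁆ L') (h : I ≤ f.ker) : L ⧸ I →ₗ⁅R⁆ L' :=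
  { I.toSubmodule.liftQ f.toLinearMap h with
    map_lie' := by
      intro x y
      obtain ⟨x, rfl⟩ := I.mkQ_surjective x
      obtain ⟨y, rfl⟩ := I.mkQ_surjective y
      exact f.map_lie x y }

end LieIdeal

def LinearMap.toLieHomOfIsLieAbelian {R L L' : Type*} [CommRing R] [LieRing L] [LieAlgebra R L]
    [LieRing L'] [LieAlgebra R L'] [IsLieAbelian L] [IsLieAbelian L'] (f : L →ₗ[R] L') :
    L →ₗ⁅R⁆ L' :=
  { f with map_lie' {x y} := by rw [trivial_lie_zero, trivial_lie_zero]; exact f.map_zero }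

theorem finrank_eq_card_of_span_eq_top_of_map_eq_single {K M ι : Type*} [Field K]
    [AddCommGroup M] [Module K M] [Fintype ι] [DecidableEq ι] {v : ι → M}
    (hv : Submodule.span K (Set.range v) = ⊤) (f : M →ₗ[K] ι → K)
    (hf : ∀ i, f (v i) = Pi.single i 1) :
    finrank K M = Fintype.card ι := by
  have hli : LinearIndependent K v := by
    refine LinearIndependent.of_comp f ?_
    rw [show f ∘ v = fun i => Pi.single i 1 from funext hf]
    exact Pi.linearIndependent_single_one ι K
  exact finrank_eq_card_basis (Basis.mk hli hv.ge)

namespace NTensor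

variable {F : Type u} [Field F] {L : Type v} [LieRing L] [LieAlgebra F L]

variable (F L) in
noncomputable abbrev relIdeal : LieIdeal F (FreeLieAlgebra F (L × L)) :=
  LieSubmodule.lieSpan F (FreeLieAlgebra F (L × L)) (tensorRel F L)

theorem mkQ_eq_zero_of_mem_tensorRel {r : FreeLieAlgebra F (L × L)} (hr : r ∈ tensorRel F L) :
    (relIdeal F L).mkQ r = 0 :=
  LieSubmodule.Quotient.mk_eq_zero'.mpr (LieSubmodule.subset_lieSpan hr)

theorem tmk_smul_left (c : F) (a b : L) : tmk F L (c • a) b = c • tmk F L a b := by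
  have h := mkQ_eq_zero_of_mem_tensorRel (F := F) (Or.inl ⟨c, a, b, rfl⟩)
  rwa [map_sub, map_smul, sub_eq_zero] at h

theorem tmk_smul_right (c : F) (a b : L) : tmk F L a (c • b) = c • tmk F L a b := by
  have h := mkQ_eq_zero_of_mem_tensorRel (F := F) (Or.inr <| Or.inl ⟨c, a, b, rfl⟩)
  rwa [map_sub, map_smul, sub_eq_zero] at h

theorem tmk_add_left (a a' b : L) : tmk F L (a + a') b = tmk F L a b + tmk F L a' b := by
  have h := mkQ_eq_zero_of_mem_tensorRel (F := F) (Or.inr <| Or.inr <| Or.inl ⟨a, a', b, rfl⟩)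
  rwa [map_sub, map_sub, sub_sub, sub_eq_zero] at h

theorem tmk_add_right (a b b' : L) : tmk F L a (b + b') = tmk F L a b + tmk F L a b' := by
  have h := mkQ_eq_zero_of_mem_tensorRel (F := F)
    (Or.inr <| Or.inr <| Or.inr <| Or.inl ⟨a, b, b', rfl⟩)
  rwa [map_sub, map_sub, sub_sub, sub_eq_zero] at h

theorem tmk_lie_left (a a' b : L) :
    tmk F L ⁅a, a'⁆ b = tmk F L a ⁅a', b⁆ - tmk F L a' ⁅a, b⁆ := by
  have h := mkQ_eq_zero_of_mem_tensorRel (F := F)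
    (Or.inr <| Or.inr <| Or.inr <| Or.inr <| Or.inl ⟨a, a', b, rfl⟩)
  rw [map_add, map_sub, sub_add_eq_add_sub, sub_eq_zero] at h
  exact eq_sub_of_add_eq h

theorem tmk_lie_right (a b b' : L) :
    tmk F L a ⁅b, b'⁆ = tmk F L ⁅b', a⁆ b - tmk F L ⁅b, a⁆ b' := by
  have h := mkQ_eq_zero_of_mem_tensorRel (F := F)
    (Or.inr <| Or.inr <| Or.inr <| Or.inr <| Or.inr <| Or.inl ⟨a, b, b', rfl⟩)
  rw [map_add, map_sub, sub_add_eq_add_sub, sub_eq_zero] at h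
  exact eq_sub_of_add_eq h

theorem lie_tmk_tmk (a b a' b' : L) :
    ⁅tmk F L a b, tmk F L a' b'⁆ = -tmk F L ⁅b, a⁆ ⁅a', b'⁆ := by
  have h := mkQ_eq_zero_of_mem_tensorRel (F := F)
    (Or.inr <| Or.inr <| Or.inr <| Or.inr <| Or.inr <| Or.inr ⟨a, b, a', b', rfl⟩)
  rw [map_add, LieHom.map_lie] at h
  exact eq_neg_of_add_eq_zero_left h

variable (F L) in
noncomputable def tmkₗ : L →ₗ[F] L →ₗ[F] NTensor F L :=
  LinearMap.mk₂ F (tmk F L) tmk_add_left tmk_smul_left tmk_add_right tmk_smul_right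

@[simp] theorem tmkₗ_apply (a b : L) : tmkₗ F L a b = tmk F L a b := rfl

@[simp] theorem tmk_zero_left (b : L) : tmk F L 0 b = 0 := LinearMap.map_zero₂ (tmkₗ F L) b

@[simp] theorem tmk_zero_right (a : L) : tmk F L a 0 = 0 := (tmkₗ F L a).map_zero

@[simp] theorem tmk_neg_left (a b : L) : tmk F L (-a) b = -tmk F L a b :=
  LinearMap.map_neg₂ (tmkₗ F L) a b

@[simp] theorem tmk_neg_right (a b : L) : tmk F L a (-b) = -tmk F L a b :=
  (tmkₗ F L a).map_neg b

theorem tmk_lie_self (a b : L) : tmk F L ⁅a, b⁆ ⁅a, b⁆ = 0 := by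
  have h := lie_tmk_tmk (F := F) a b a b
  rwa [lie_self, ← lie_skew, tmk_neg_left, neg_neg, eq_comm] at h

theorem tmk_lie_left_self (a b : L) : tmk F L ⁅a, b⁆ a = -tmk F L a ⁅a, b⁆ := by
  rw [tmk_lie_left, lie_self, tmk_zero_right, sub_zero, ← lie_skew, tmk_neg_right]

theorem tmk_lie_right_self (a b : L) : tmk F L ⁅a, b⁆ b = -tmk F L b ⁅a, b⁆ := by
  rw [tmk_lie_left, lie_self, tmk_zero_right, zero_sub]

variable (F L) in
theorem lieSpan_range_tmk :
    LieSubalgebra.lieSpan F (NTensor F L) (Set.range (Function.uncurry (tmk F L))) = ⊤ := by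
  have h : Function.uncurry (tmk F L) = (relIdeal F L).mkQ ∘ FreeLieAlgebra.of F := rfl
  rw [h, Set.range_comp, ← LieSubalgebra.map_lieSpan, FreeLieAlgebra.lieSpan_range_of,
    ← LieHom.range_eq_map, LieHom.range_eq_top]
  exact (relIdeal F L).mkQ_surjective

theorem isLieAbelian_of_tmk_lie_lie (h : ∀ a b c d : L, tmk F L ⁅a, b⁆ ⁅c, d⁆ = 0) :
    IsLieAbelian (NTensor F L) := by
  have habel : IsLieAbelian (LieSubalgebra.lieSpan F (NTensor F L)
      (Set.range (Function.uncurry (tmk F L)))) :=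
    LieSubalgebra.isLieAbelian_lieSpan_iff.mpr <| by
      rintro _ ⟨⟨a, b⟩, rfl⟩ _ ⟨⟨c, d⟩, rfl⟩
      rw [Function.uncurry_apply_pair, Function.uncurry_apply_pair, lie_tmk_tmk, h, neg_zero]
  rw [lieSpan_range_tmk] at habel
  exact (lie_abelian_iff_equiv_lie_abelian LieSubalgebra.topEquiv).mp habel

variable (F L) in
theorem span_range_tmk [IsLieAbelian (NTensor F L)] :
    Submodule.span F (Set.range (Function.uncurry (tmk F L))) = ⊤ := by
  rw [← LieSubalgebra.coe_lieSpan_eq_span_of_forall_lie_eq_zero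
    (fun x _ y _ => trivial_lie_zero _ _ x y), lieSpan_range_tmk]
  rfl

noncomputable def lift {A : Type*} [LieRing A] [LieAlgebra F A] (f : L → L → A)
    (hf : ∀ r ∈ tensorRel F L, FreeLieAlgebra.lift F (Function.uncurry f) r = 0) :
    NTensor F L →ₗ⁅F⁆ A :=
  (relIdeal F L).liftQ (FreeLieAlgebra.lift F (Function.uncurry f))
    (LieSubmodule.lieSpan_le.mpr hf)

@[simp]
theorem lift_tmk {A : Type*} [LieRing A] [LieAlgebra F A] (f : L → L → A)
    (hf : ∀ r ∈ tensorRel F L, FreeLieAlgebra.lift F (Function.uncurry f) r = 0) (a b : L) :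
    lift f hf (tmk F L a b) = f a b :=
  FreeLieAlgebra.lift_of_apply _ _

end NTensor

namespace ExtSq

variable {F : Type u} [Field F] {L : Type v} [LieRing L] [LieAlgebra F L]

theorem wmk_eq_mkQ (a b : L) : wmk F L a b = (sqIdeal F L).mkQ (tmk F L a b) := rfl

theorem wmk_self (a : L) : wmk F L a a = 0 :=
  LieSubmodule.Quotient.mk_eq_zero'.mpr (LieSubmodule.subset_lieSpan ⟨a, rfl⟩)

theorem wmk_swap (a b : L) : wmk F L b a = -wmk F L a b := by
  have h := wmk_self (F := F) (a + b)
  rw [wmk_eq_mkQ, NTensor.tmk_add_left, NTensor.tmk_add_right, NTensor.tmk_add_right, map_add,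
    map_add, map_add, ← wmk_eq_mkQ, ← wmk_eq_mkQ, ← wmk_eq_mkQ, ← wmk_eq_mkQ, wmk_self, wmk_self,
    zero_add, add_zero] at h
  exact eq_neg_of_add_eq_zero_right h

end ExtSq

namespace AbLie

variable {F : Type*} [Field F] {k : ℕ}

@[simp] theorem zero_apply (i : Fin k) : (0 : AbLie F k) i = 0 := rfl
@[simp] theorem add_apply (a b : AbLie F k) (i : Fin k) : (a + b) i = a i + b i := rfl
@[simp] theorem sub_apply (a b : AbLie F k) (i : Fin k) : (a - b) i = a i - b i := rfl
@[simp] theorem smul_apply (c : F) (a : AbLie F k) (i : Fin k) : (c • a) i = c * a i := rfl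
@[simp] theorem lie_eq_zero (a b : AbLie F k) : ⁅a, b⁆ = 0 := rfl

end AbLie

namespace L43

open NTensor

variable (F : Type u) [Field F]

theorem lie_def (x y : L43 F) :
    ⁅x, y⁆ = ![0, 0, x 0 * y 1 - y 0 * x 1, x 0 * y 2 - y 0 * x 2] := rfl

@[simp] theorem zero_apply (i : Fin 4) : (0 : L43 F) i = 0 := rfl
@[simp] theorem add_apply (a b : L43 F) (i : Fin 4) : (a + b) i = a i + b i := rfl
@[simp] theorem smul_apply (c : F) (a : L43 F) (i : Fin 4) : (c • a) i = c * a i := rfl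

/-- `stdBasis F i` is the paper's `x_{i+1}`. -/
noncomputable def stdBasis : Basis (Fin 4) F (L43 F) := Pi.basisFun F (Fin 4)

@[simp] theorem stdBasis_apply (i j : Fin 4) : stdBasis F i j = if j = i then 1 else 0 :=
  (congrFun (Pi.basisFun_apply F (Fin 4) i) j).trans (Pi.single_apply i 1 j)

@[simp] theorem stdBasis_repr (a : L43 F) (i : Fin 4) : (stdBasis F).repr a i = a i :=
  Pi.basisFun_repr (R := F) (η := Fin 4) a i

theorem lie_stdBasis_zero_one : ⁅stdBasis F 0, stdBasis F 1⁆ = stdBasis F 2 := by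
  funext k; fin_cases k <;> simp [lie_def]

theorem lie_stdBasis_zero_two : ⁅stdBasis F 0, stdBasis F 2⁆ = stdBasis F 3 := by
  funext k; fin_cases k <;> simp [lie_def]

theorem lie_stdBasis_two_one : ⁅stdBasis F 2, stdBasis F 1⁆ = 0 := by
  funext k; fin_cases k <;> simp [lie_def]

theorem lie_stdBasis_three (a : L43 F) : ⁅a, stdBasis F 3⁆ = 0 := by
  funext k; fin_cases k <;> simp [lie_def]

theorem tmk_eq_sum (a b : L43 F) :
    tmk F (L43 F) a b = ∑ i, ∑ j, (a i * b j) • tmk F (L43 F) (stdBasis F i) (stdBasis F j) := by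
  conv_lhs => rw [← (stdBasis F).sum_repr a, ← (stdBasis F).sum_repr b]
  simp only [← tmkₗ_apply, map_sum, map_smul, LinearMap.sum_apply, LinearMap.smul_apply,
    Finset.smul_sum, smul_smul]
  rw [Finset.sum_comm]
  simp [mul_comm]

theorem tmk_stdBasis_two_two : tmk F (L43 F) (stdBasis F 2) (stdBasis F 2) = 0 := by
  simpa [lie_stdBasis_zero_one] using tmk_lie_self (F := F) (stdBasis F 0) (stdBasis F 1)

theorem tmk_stdBasis_two_three : tmk F (L43 F) (stdBasis F 2) (stdBasis F 3) = 0 := by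
  simpa [lie_stdBasis_zero_one, lie_stdBasis_three] using
    tmk_lie_left (F := F) (stdBasis F 0) (stdBasis F 1) (stdBasis F 3)

theorem tmk_stdBasis_three_three : tmk F (L43 F) (stdBasis F 3) (stdBasis F 3) = 0 := by
  simpa [lie_stdBasis_zero_two, lie_stdBasis_three] using
    tmk_lie_left (F := F) (stdBasis F 0) (stdBasis F 2) (stdBasis F 3)

theorem tmk_stdBasis_three_two : tmk F (L43 F) (stdBasis F 3) (stdBasis F 2) = 0 := by
  simpa [lie_stdBasis_zero_two, tmk_stdBasis_two_three] using
    tmk_lie_right_self (F := F) (stdBasis F 0) (stdBasis F 2)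

theorem tmk_stdBasis_three_one : tmk F (L43 F) (stdBasis F 3) (stdBasis F 1) = 0 := by
  simpa [lie_stdBasis_zero_two, lie_stdBasis_two_one, lie_stdBasis_zero_one,
    tmk_stdBasis_two_two] using
    tmk_lie_left (F := F) (stdBasis F 0) (stdBasis F 2) (stdBasis F 1)

theorem tmk_stdBasis_one_three : tmk F (L43 F) (stdBasis F 1) (stdBasis F 3) = 0 := by
  simpa [lie_stdBasis_zero_two, lie_stdBasis_two_one, lie_stdBasis_zero_one,
    tmk_stdBasis_two_two] using
    tmk_lie_right (F := F) (stdBasis F 1) (stdBasis F 0) (stdBasis F 2)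

theorem tmk_stdBasis_two_zero : tmk F (L43 F) (stdBasis F 2) (stdBasis F 0) =
    -tmk F (L43 F) (stdBasis F 0) (stdBasis F 2) := by
  simpa [lie_stdBasis_zero_one] using tmk_lie_left_self (F := F) (stdBasis F 0) (stdBasis F 1)

theorem tmk_stdBasis_two_one : tmk F (L43 F) (stdBasis F 2) (stdBasis F 1) =
    -tmk F (L43 F) (stdBasis F 1) (stdBasis F 2) := by
  simpa [lie_stdBasis_zero_one] using tmk_lie_right_self (F := F) (stdBasis F 0) (stdBasis F 1)

theorem tmk_stdBasis_three_zero : tmk F (L43 F) (stdBasis F 3) (stdBasis F 0) =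
    -tmk F (L43 F) (stdBasis F 0) (stdBasis F 3) := by
  simpa [lie_stdBasis_zero_two] using tmk_lie_left_self (F := F) (stdBasis F 0) (stdBasis F 2)

noncomputable def tensorFamily : Fin 7 → NTensor F (L43 F) :=
  ![tmk F _ (stdBasis F 0) (stdBasis F 1), tmk F _ (stdBasis F 0) (stdBasis F 2),
    tmk F _ (stdBasis F 0) (stdBasis F 3), tmk F _ (stdBasis F 1) (stdBasis F 2),
    tmk F _ (stdBasis F 0) (stdBasis F 0), tmk F _ (stdBasis F 1) (stdBasis F 1),
    tmk F _ (stdBasis F 0) (stdBasis F 1) + tmk F _ (stdBasis F 1) (stdBasis F 0)]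

def tensorCoords (a b : L43 F) : AbLie F 7 :=
  ![a 0 * b 1 - a 1 * b 0, a 0 * b 2 - a 2 * b 0, a 0 * b 3 - a 3 * b 0, a 1 * b 2 - a 2 * b 1,
    a 0 * b 0, a 1 * b 1, a 1 * b 0]

theorem tmk_eq_sum_tensorCoords (a b : L43 F) :
    tmk F (L43 F) a b = ∑ k, tensorCoords F a b k • tensorFamily F k := by
  rw [tmk_eq_sum]
  simp [Fin.sum_univ_four, Fin.sum_univ_seven, tensorCoords, tensorFamily, tmk_stdBasis_two_two,
    tmk_stdBasis_two_three, tmk_stdBasis_three_three, tmk_stdBasis_three_two,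
    tmk_stdBasis_three_one, tmk_stdBasis_one_three, tmk_stdBasis_two_zero, tmk_stdBasis_two_one,
    tmk_stdBasis_three_zero]
  module

theorem tensorCoords_lie_lie (a b c d : L43 F) : tensorCoords F ⁅a, b⁆ ⁅c, d⁆ = 0 := by
  funext k; fin_cases k <;> simp [tensorCoords, lie_def]

instance : IsLieAbelian (NTensor F (L43 F)) :=
  isLieAbelian_of_tmk_lie_lie fun a b c d => by
    rw [tmk_eq_sum_tensorCoords, tensorCoords_lie_lie]
    simp

theorem span_tensorFamily : Submodule.span F (Set.range (tensorFamily F)) = ⊤ := by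
  rw [eq_top_iff, ← span_range_tmk, Submodule.span_le]
  rintro _ ⟨⟨a, b⟩, rfl⟩
  rw [Function.uncurry_apply_pair, tmk_eq_sum_tensorCoords]
  exact Submodule.sum_mem _ fun k _ => Submodule.smul_mem _ _ (Submodule.subset_span ⟨k, rfl⟩)

theorem lift_tensorCoords_eq_zero_of_mem_tensorRel :
    ∀ r ∈ tensorRel F (L43 F), FreeLieAlgebra.lift F (Function.uncurry (tensorCoords F)) r = 0 := by
  rintro r (⟨c, a, b, rfl⟩ | ⟨c, a, b, rfl⟩ | ⟨a, a', b, rfl⟩ | ⟨a, b, b', rfl⟩ | ⟨a, a', b, rfl⟩ |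
    ⟨a, b, b', rfl⟩ | ⟨a, b, a', b', rfl⟩) <;>
  simp only [map_sub, map_add, map_smul, LieHom.map_lie, FreeLieAlgebra.lift_of_apply,
    Function.uncurry_apply_pair] <;>
  · funext i
    simp only [AbLie.sub_apply, AbLie.add_apply, AbLie.smul_apply, AbLie.lie_eq_zero,
      AbLie.zero_apply]
    fin_cases i <;> simp [tensorCoords, lie_def] <;> ring

noncomputable def tensorCoordsHom : NTensor F (L43 F) →ₗ⁅F⁆ AbLie F 7 :=
  NTensor.lift (tensorCoords F) (lift_tensorCoords_eq_zero_of_mem_tensorRel F)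

@[simp]
theorem tensorCoordsHom_tmk (a b : L43 F) :
    tensorCoordsHom F (tmk F (L43 F) a b) = tensorCoords F a b :=
  NTensor.lift_tmk _ _ a b

theorem tensorCoordsHom_tensorFamily (k : Fin 7) :
    tensorCoordsHom F (tensorFamily F k) = Pi.single k 1 := by
  fin_cases k <;> funext i <;> simp [tensorFamily] <;> fin_cases i <;> simp [tensorCoords]

theorem finrank_nTensor : finrank F (NTensor F (L43 F)) = 7 := by
  rw [finrank_eq_card_of_span_eq_top_of_map_eq_single (span_tensorFamily F)
    (tensorCoordsHom F).toLinearMap (tensorCoordsHom_tensorFamily F), Fintype.card_fin]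

noncomputable def restrictCoords : AbLie F 7 →ₗ⁅F⁆ AbLie F 4 :=
  LinearMap.toLieHomOfIsLieAbelian
    (LinearMap.funLeft F F (Fin.castLE (by norm_num)) : AbLie F 7 →ₗ[F] AbLie F 4)

@[simp]
theorem restrictCoords_apply (x : AbLie F 7) (i : Fin 4) :
    restrictCoords F x i = x (Fin.castLE (by norm_num) i) := rfl

/-- The first four coordinates are alternating in `(a, b)`, so they vanish on every `a ⊗ a`. -/
noncomputable def extCoordsHom : ExtSq F (L43 F) →ₗ⁅F⁆ AbLie F 4 :=
  (sqIdeal F (L43 F)).liftQ ((restrictCoords F).comp (tensorCoordsHom F)) <| by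
    refine LieSubmodule.lieSpan_le.mpr ?_
    rintro _ ⟨a, rfl⟩
    refine LieHom.mem_ker.mpr (funext fun i => ?_)
    simp only [LieHom.comp_apply, tensorCoordsHom_tmk, restrictCoords_apply, AbLie.zero_apply]
    fin_cases i <;> simp [tensorCoords] <;> ring

@[simp]
theorem extCoordsHom_wmk (a b : L43 F) :
    extCoordsHom F (wmk F (L43 F) a b) = restrictCoords F (tensorCoords F a b) :=
  congrArg (restrictCoords F) (tensorCoordsHom_tmk F a b)

noncomputable def extFamily : Fin 4 → ExtSq F (L43 F) :=
  ![wmk F _ (stdBasis F 0) (stdBasis F 1), wmk F _ (stdBasis F 0) (stdBasis F 2),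
    wmk F _ (stdBasis F 0) (stdBasis F 3), wmk F _ (stdBasis F 1) (stdBasis F 2)]

theorem extCoordsHom_extFamily (k : Fin 4) :
    extCoordsHom F (extFamily F k) = Pi.single k 1 := by
  fin_cases k <;> funext i <;> simp [extFamily] <;> fin_cases i <;> simp [tensorCoords]

theorem mkQ_tensorFamily_mem_span (k : Fin 7) :
    (sqIdeal F (L43 F)).mkQ (tensorFamily F k) ∈ Submodule.span F (Set.range (extFamily F)) := by
  have hmem : ∀ j, extFamily F j ∈ Submodule.span F (Set.range (extFamily F)) :=
    fun j => Submodule.subset_span ⟨j, rfl⟩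
  fin_cases k
  · exact hmem 0
  · exact hmem 1
  · exact hmem 2
  · exact hmem 3
  · show wmk F _ (stdBasis F 0) (stdBasis F 0) ∈ _
    rw [ExtSq.wmk_self]; exact zero_mem _
  · show wmk F _ (stdBasis F 1) (stdBasis F 1) ∈ _
    rw [ExtSq.wmk_self]; exact zero_mem _
  · show wmk F _ (stdBasis F 0) (stdBasis F 1) + wmk F _ (stdBasis F 1) (stdBasis F 0) ∈ _
    rw [ExtSq.wmk_swap, neg_add_cancel]; exact zero_mem _

theorem span_extFamily : Submodule.span F (Set.range (extFamily F)) = ⊤ := by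
  refine eq_top_iff.mpr fun z _ => ?_
  obtain ⟨t, rfl⟩ := (sqIdeal F (L43 F)).mkQ_surjective z
  have ht := Submodule.mem_map_of_mem (f := (sqIdeal F (L43 F)).mkQ.toLinearMap)
    ((span_tensorFamily F).ge (Submodule.mem_top (x := t)))
  rw [Submodule.map_span, ← Set.range_comp] at ht
  refine Submodule.span_le.mpr ?_ ht
  rintro _ ⟨k, rfl⟩
  exact mkQ_tensorFamily_mem_span F k

theorem finrank_extSq : finrank F (ExtSq F (L43 F)) = 4 := by
  rw [finrank_eq_card_of_span_eq_top_of_map_eq_single (span_extFamily F)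
    (extCoordsHom F).toLinearMap (extCoordsHom_extFamily F), Fintype.card_fin]

end L43

/-- `L_{4,3} ∧ L_{4,3}` is abelian of dimension 4 and
`L_{4,3} ⊗ L_{4,3}` is abelian of dimension 7. -/
theorem L43_exterior_and_tensor (F : Type u) [Field F] :
    IsLieAbelian (ExtSq F (L43 F)) ∧ Module.finrank F (ExtSq F (L43 F)) = 4 ∧
    IsLieAbelian (NTensor F (L43 F)) ∧ Module.finrank F (NTensor F (L43 F)) = 7 :=
  ⟨inferInstance, L43.finrank_extSq F, inferInstance, L43.finrank_nTensor F⟩
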